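/- Let a, b, c, d, p be points of ℝ³ such that {a, b, d} and {a, b, c} are each linearly independent. Suppose: (i) c and the origin 0 lie strictly on opposite sides of the affine span of {a, b, d}; (ii) p and 0 lie strictly on the same side of the affine span of {a, b, d}; and (iii) p and c lie weakly on the same side of the plane through 0, a, b (the affine span of {0, a, b}). Then p and 0 lie strictly on the same side of the affine span of {a, b, c}. (This is the key geometric step used in the proofs of both the paper's Proposition that local convexity at every face implies global convexity, and its Theorem that the edge flipping algorithm terminates: in the half-space of the plane through o, a, b containing c and p, if the face abc lies above the face abd and p lies below abd, then p lies below abc.) -/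

import Mathlib

/-!
Let `f` and `g` be the linear functionals with `affineSpan {a, b, d} = {f = 1}` and
`affineSpan {a, b, c} = {g = 1}`; then "below" a face means `< 1`, "above" means `> 1`.
The functional `g - f` vanishes at `0`, `a`, `b`, hence on the plane through them, and
`(g - f) c = 1 - f c < 0` because `c` is above `abd`. As `p` is weakly on the side of `c`,
`(g - f) p ≤ 0`, so `g p ≤ f p < 1`.
-/

open Module

theorem SameRay.mul_nonneg {k : Type*} [Field k] [LinearOrder k] [IsStrictOrderedRing k]
    {u v : k} (h : SameRay k u v) : 0 ≤ u * v := by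
  obtain ⟨w, s, t, hs, ht, -, rfl, rfl⟩ := h.exists_eq_smul
  simp only [smul_eq_mul]
  nlinarith [_root_.mul_nonneg (_root_.mul_nonneg hs ht) (mul_self_nonneg w)]

namespace AffineSubspace

variable {k V P : Type*} [Field k] [LinearOrder k] [IsStrictOrderedRing k]
  [AddCommGroup V] [Module k V] [AddTorsor V P]
  {s : AffineSubspace k P} {f : P →ᵃ[k] k} {r : k} {x y : P}

theorem WSameSide.sub_mul_sub_nonneg (hf : ∀ q ∈ s, f q = r) (h : s.WSameSide x y) :
    0 ≤ (f x - r) * (f y - r) := by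
  obtain ⟨p₁, hp₁, p₂, hp₂, hray⟩ := h
  simpa [hf p₁ hp₁, hf p₂ hp₂] using (hray.map f.linear).mul_nonneg

theorem WOppSide.sub_mul_sub_nonpos (hf : ∀ q ∈ s, f q = r) (h : s.WOppSide x y) :
    (f x - r) * (f y - r) ≤ 0 := by
  obtain ⟨p₁, hp₁, p₂, hp₂, hray⟩ := h
  have := (hray.map f.linear).mul_nonneg
  simp only [AffineMap.linearMap_vsub, vsub_eq_sub, hf p₁ hp₁, hf p₂ hp₂] at this
  nlinarith

theorem SOppSide.sub_mul_sub_neg (hs : ∀ q, q ∈ s ↔ f q = r) (h : s.SOppSide x y) :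
    (f x - r) * (f y - r) < 0 :=
  (h.wOppSide.sub_mul_sub_nonpos fun q => (hs q).1).lt_of_ne <|
    mul_ne_zero (sub_ne_zero.2 fun hx => h.left_notMem ((hs x).2 hx))
      (sub_ne_zero.2 fun hy => h.right_notMem ((hs y).2 hy))

theorem sSameSide_iff_sub_mul_sub_pos (hs : ∀ q, q ∈ s ↔ f q = r) {m : V}
    (hm : f.linear m = 1) : s.SSameSide x y ↔ 0 < (f x - r) * (f y - r) := by
  refine ⟨fun h => (h.wSameSide.sub_mul_sub_nonneg fun q => (hs q).1).lt_of_ne' <|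
    mul_ne_zero (sub_ne_zero.2 fun hx => h.left_notMem ((hs x).2 hx))
      (sub_ne_zero.2 fun hy => h.right_notMem ((hs y).2 hy)), fun h => ?_⟩
  have foot : ∀ z, (r - f z) • m +ᵥ z ∈ s := fun z => by
    simp [hs, AffineMap.map_vadd, hm]
  have disp : ∀ z, z -ᵥ ((r - f z) • m +ᵥ z) = (f z - r) • m := fun z => by
    rw [vsub_vadd_eq_vsub_sub, vsub_self, zero_sub, ← neg_smul, neg_sub]
  exact sSameSide_of_vsub_eq_smul (foot x) (foot y) (disp x) (disp y) h.le
    (fun hx => (ne_of_gt h) (by rw [(hs x).1 hx, sub_self, zero_mul]))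
    (fun hy => (ne_of_gt h) (by rw [(hs y).1 hy, sub_self, mul_zero]))

end AffineSubspace

theorem Module.Basis.mem_affineSpan_range_iff {k V ι : Type*} [Ring k] [Nontrivial k]
    [AddCommGroup V] [Module k V] [Fintype ι] (B : Basis ι k V) {x : V} :
    x ∈ affineSpan k (Set.range B) ↔ B.sumCoords x = 1 := by
  constructor
  · intro hx
    refine AffineMap.eqOn_affineSpan (f := B.sumCoords.toAffineMap) (g := AffineMap.const k V 1)
      ?_ hx
    rintro - ⟨i, rfl⟩
    simp
  · intro hx
    have hw : ∑ i, B.repr x i = 1 := by simpa [B.coe_sumCoords_of_fintype] using hx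
    rw [mem_affineSpan_iff_eq_affineCombination]
    exact ⟨Finset.univ, B.repr x, hw, by
      rw [Finset.affineCombination_eq_linear_combination _ _ _ hw, B.sum_repr]⟩

theorem exists_linearMap_mem_affineSpan_iff {k V : Type*} [Field k] [AddCommGroup V]
    [Module k V] (hV : finrank k V = 3) {a b c : V} (h : LinearIndependent k ![a, b, c]) :
    ∃ f : V →ₗ[k] k, ∀ x, x ∈ affineSpan k {a, b, c} ↔ f x = 1 := by
  have hcard : Fintype.card (Fin 3) = finrank k V := by simp [hV]
  let B := basisOfLinearIndependentOfCardEqFinrank h hcard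
  have hrange : Set.range B = {a, b, c} := by
    rw [coe_basisOfLinearIndependentOfCardEqFinrank, Matrix.range_cons,
      Matrix.range_cons_cons_empty, Set.singleton_union]
  exact ⟨B.sumCoords, fun x => hrange ▸ B.mem_affineSpan_range_iff⟩

/-- Key geometric step: if `{a, b, d}` and `{a, b, c}` are each linearly
independent, `c` lies above the face `abd` (strictly opposite side from the
origin), `p` lies below the face `abd` (strictly same side as the origin), and
`p` and `c` lie weakly on the same side of the plane through `0, a, b`, then `p`
lies below the face `abc`. -/
theorem below_of_below_neighbour (a b c d p : Fin 3 → ℝ)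
    (habd : LinearIndependent ℝ ![a, b, d])
    (habc : LinearIndependent ℝ ![a, b, c])
    (hc : (affineSpan ℝ {a, b, d}).SOppSide c 0)
    (hp : (affineSpan ℝ {a, b, d}).SSameSide p 0)
    (hside : (affineSpan ℝ {(0 : Fin 3 → ℝ), a, b}).WSameSide p c) :
    (affineSpan ℝ {a, b, c}).SSameSide p 0 := by
  have h3 : finrank ℝ (Fin 3 → ℝ) = 3 := by simp
  obtain ⟨f, hf⟩ := exists_linearMap_mem_affineSpan_iff h3 habd
  obtain ⟨g, hg⟩ := exists_linearMap_mem_affineSpan_iff h3 habc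
  have hfa : f a = 1 := (hf a).1 (mem_affineSpan ℝ (by simp))
  have hfb : f b = 1 := (hf b).1 (mem_affineSpan ℝ (by simp))
  have hga : g a = 1 := (hg a).1 (mem_affineSpan ℝ (by simp))
  have hgb : g b = 1 := (hg b).1 (mem_affineSpan ℝ (by simp))
  have hgc : g c = 1 := (hg c).1 (mem_affineSpan ℝ (by simp))
  have hfc : 1 < f c := by simpa using hc.sub_mul_sub_neg (f := f.toAffineMap) hf
  have hfp : f p < 1 := by
    simpa using (AffineSubspace.sSameSide_iff_sub_mul_sub_pos (f := f.toAffineMap) hf hfa).1 hp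
  have hvanish : ∀ q ∈ affineSpan ℝ {(0 : Fin 3 → ℝ), a, b}, (g - f).toAffineMap q = 0 :=
    fun q hq => AffineMap.eqOn_affineSpan (g := AffineMap.const ℝ _ 0)
      (by rintro _ (rfl | rfl | rfl) <;> simp [hfa, hfb, hga, hgb]) hq
  have hgfp : g p - f p ≤ 0 := by
    have := hside.sub_mul_sub_nonneg hvanish
    simp only [LinearMap.coe_toAffineMap, LinearMap.sub_apply, hgc, sub_zero] at this
    exact nonpos_of_mul_nonneg_left this (by linarith)
  rw [AffineSubspace.sSameSide_iff_sub_mul_sub_pos (f := g.toAffineMap) hg hga]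
  simpa using show g p < 1 by linarith
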